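/- arXiv:2308.16033 — 4 statements merged into one kernel-verified Lean document; each statement's English description precedes it below -/
import Mathlib

section
/- Let D = bcc(H1, H2) be the bi-conflict composition of graphs H1, H2 joined by a perfect matching M. Then the maximum size of an independent set in the neighborhood of any vertex of D (the maximum claw size) is at most min{α(H1), α(H2)}·2, and more precisely, if a set of matching edges forms an induced matching in D' and all intersect a common edge e, then their endpoints on one side form an independent set in the corresponding copy of H. -/
variable {V : Type*}

/-- `s` is an independent set of `G`. -/
def IsIndep (G : SimpleGraph V) (s : Finset V) : Prop :=
  ∀ u ∈ s, ∀ w ∈ s, u ≠ w → ¬ G.Adj u w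

/-- The graph `D'` obtained from two disjoint copies of `H1` and `H2` (on the same
vertex set `V`, placed on `Sum.inl` and `Sum.inr` respectively) together with the
perfect matching joining each vertex `i` of `H1` to the corresponding vertex `i` of `H2`. -/
def matchedUnion (H1 H2 : SimpleGraph V) : SimpleGraph (V ⊕ V) :=
  SimpleGraph.fromRel (fun x y =>
    match x, y with
    | Sum.inl a, Sum.inl b => H1.Adj a b
    | Sum.inr a, Sum.inr b => H2.Adj a b
    | Sum.inl a, Sum.inr b => a = b
    | _, _ => False)

/-- The endpoints in `D'` of the matching edge indexed by `i`. -/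
def ends (i : V) : Set (V ⊕ V) := {Sum.inl i, Sum.inr i}

/-- A set `s` of matching edges forms an induced matching in `D' = matchedUnion H1 H2`:
between the endpoint sets of two distinct matching edges there is no edge of `D'`. -/
def IsInducedMatching (H1 H2 : SimpleGraph V) (s : Finset V) : Prop :=
  ∀ i ∈ s, ∀ j ∈ s, i ≠ j →
    ∀ x ∈ ends i, ∀ y ∈ ends j, ¬ (matchedUnion H1 H2).Adj x y

/-- A set `s` of matching edges is an intersecting matching: every pair of distinct
matching edges does *not* form an induced matching, i.e. some edge of `D'` joins
their endpoint sets. -/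
def IsIntersectingMatching (H1 H2 : SimpleGraph V) (s : Finset V) : Prop :=
  ∀ i ∈ s, ∀ j ∈ s, i ≠ j →
    ∃ x ∈ ends i, ∃ y ∈ ends j, (matchedUnion H1 H2).Adj x y

/-- The bi-conflict composition `D = bcc(H1, H2)`: vertices are the matching edges,
and two matching edges are adjacent iff they do not form an induced matching in `D'`. -/
def bcc (H1 H2 : SimpleGraph V) : SimpleGraph V :=
  SimpleGraph.fromRel (fun i j =>
    ∃ x ∈ ends i, ∃ y ∈ ends j, (matchedUnion H1 H2).Adj x y)



lemma adj1_to_bcc (H1 H2 : SimpleGraph V) {i j : V} (h : H1.Adj i j) :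
    (bcc H1 H2).Adj i j := by
  refine ⟨h.ne, Or.inl ⟨Sum.inl i, Or.inl rfl, Sum.inl j, Or.inl rfl, ?_⟩⟩
  exact ⟨by simpa using h.ne, Or.inl h⟩

lemma adj2_to_bcc (H1 H2 : SimpleGraph V) {i j : V} (h : H2.Adj i j) :
    (bcc H1 H2).Adj i j := by
  refine ⟨h.ne, Or.inl ⟨Sum.inr i, Or.inr rfl, Sum.inr j, Or.inr rfl, ?_⟩⟩
  exact ⟨by simpa using h.ne, Or.inl h⟩

/-- Claws in `D = bcc(H1,H2)`: if the matching edges in `s` pairwise form induced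
matchings (i.e. `s` is independent in `D`) and each of them intersects a common
matching edge `e`, then `s` has size at most `2·min(α(H1), α(H2))`; moreover the
endpoints on either side of the edges intersecting `e` through that side form an
independent set in the corresponding copy of `H`. -/
theorem claw_bound_bcc (H1 H2 : SimpleGraph V) (a1 a2 : ℕ)
    (ha1 : ∀ s : Finset V, IsIndep H1 s → s.card ≤ a1)
    (ha2 : ∀ s : Finset V, IsIndep H2 s → s.card ≤ a2)
    (e : V) (s : Finset V)
    (he : ∀ i ∈ s, (bcc H1 H2).Adj e i)
    (hs : IsIndep (bcc H1 H2) s) :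
    s.card ≤ 2 * min a1 a2 ∧
    (∀ i ∈ s, ∀ j ∈ s, i ≠ j → H1.Adj e i → H1.Adj e j → ¬ H1.Adj i j) ∧
    (∀ i ∈ s, ∀ j ∈ s, i ≠ j → H2.Adj e i → H2.Adj e j → ¬ H2.Adj i j) := by
  have h1 : IsIndep H1 s := fun u hu w hw huw hadj => hs u hu w hw huw (adj1_to_bcc H1 H2 hadj)
  have h2 : IsIndep H2 s := fun u hu w hw huw hadj => hs u hu w hw huw (adj2_to_bcc H1 H2 hadj)
  refine ⟨?_, fun i hi j hj hij _ _ => h1 i hi j hj hij,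
    fun i hi j hj hij _ _ => h2 i hi j hj hij⟩
  have := ha1 s h1
  have := ha2 s h2
  omega
end

section
/- For any graph G on n vertices with clique number ω(G), and any ℓ ≥ 1, the assignment y_∅ = 1, y_{A} = 1/(ω(G)+ℓ) for all singletons A, and y_A = 0 for |A| ≥ 2, is a feasible solution for the level-ℓ Sherali–Adams lift of the clique-constrained stable set polytope QSTAB(G). -/
open Finset

variable {V : Type*}

/-- The clique number `ω(G)`. -/
noncomputable def cliqueNum [Fintype V] (G : SimpleGraph V) : ℕ :=
  sSup {n | ∃ s : Finset V, s.card = n ∧ G.IsClique ↑s}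

/-- The signed (junta) sum `Σ_{T' ⊆ T} (−1)^{|T'|} y_{S ∪ T'}` appearing in the
Sherali–Adams constraints. -/
def juntaSum [DecidableEq V] (y : Finset V → ℝ) (S T : Finset V) : ℝ :=
  ∑ T' ∈ T.powerset, (-1 : ℝ) ^ T'.card * y (S ∪ T')

/-- `y` is feasible for the level-`ℓ` Sherali–Adams lift `SA⁺_ℓ(G)` of `QSTAB(G)`. -/
def SAFeasible [DecidableEq V] (G : SimpleGraph V) (ℓ : ℕ) (y : Finset V → ℝ) : Prop :=
  y ∅ = 1 ∧
  ∀ S T : Finset V, Disjoint S T → (S ∪ T).card ≤ ℓ →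
    (∀ Q : Finset V, G.IsClique ↑Q →
      juntaSum y S T - ∑ i ∈ Q, juntaSum y (insert i S) T ≥ 0) ∧
    (juntaSum y S T ≥ 0) ∧
    (∀ i : V, juntaSum y (insert i S) T ≥ 0)

lemma card_le_cliqueNum [Fintype V] (G : SimpleGraph V) {Q : Finset V}
    (hQ : G.IsClique ↑Q) : Q.card ≤ cliqueNum G := by
  apply le_csSup
  · exact ⟨Fintype.card V, fun n hn => by
      obtain ⟨s, hs, _⟩ := hn; exact hs ▸ s.card_le_univ⟩
  · exact ⟨Q, rfl, hQ⟩

lemma juntaSum_insert_mem [DecidableEq V] (y : Finset V → ℝ) {i : V} {S T : Finset V}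
    (hi : i ∈ T) : juntaSum y (insert i S) T = 0 := by
  have h1 : i ∉ T.erase i := notMem_erase i T
  have h2 : T = insert i (T.erase i) := (insert_erase hi).symm
  rw [juntaSum, h2, Finset.sum_powerset_insert h1, ← Finset.sum_add_distrib]
  apply Finset.sum_eq_zero
  intro T' hT'
  have hiT' : i ∉ T' := fun h => h1 (mem_powerset.mp hT' h)
  have hcard : (insert i T').card = T'.card + 1 := card_insert_of_notMem hiT'
  have hu : insert i S ∪ insert i T' = insert i S ∪ T' := by
    rw [Finset.union_insert,
      Finset.insert_eq_self.mpr (mem_union_left _ (mem_insert_self i S))]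
  rw [hu, hcard, pow_succ]
  ring

lemma juntaSum_val [DecidableEq V] (c : ℝ) {S T : Finset V} (h : Disjoint S T) :
    juntaSum (fun A => if A = ∅ then (1:ℝ) else if A.card = 1 then c else 0) S T =
      if S = ∅ then 1 - T.card * c else if S.card = 1 then c else 0 := by
  by_cases hS : S = ∅
  · subst hS
    rw [if_pos rfl]
    have hstep : ∀ T' ∈ T.powerset,
        (-1:ℝ) ^ T'.card *
          (if (∅ ∪ T' : Finset V) = ∅ then (1:ℝ) else if (∅ ∪ T' : Finset V).card = 1 then c else 0)
          = (if T' = ∅ then (1:ℝ) else 0) + (if T'.card = 1 then -c else 0) := by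
      intro T' _
      rw [Finset.empty_union]
      rcases eq_or_ne T' ∅ with rfl | hne
      · simp
      · have h0 : T'.card ≠ 0 := by simpa [Finset.card_eq_zero] using hne
        rcases eq_or_ne T'.card 1 with h1 | h1
        · simp [hne, h1]
        · simp [hne, h1]
    rw [juntaSum, Finset.sum_congr rfl hstep, Finset.sum_add_distrib]
    have e1 : ∑ T' ∈ T.powerset, (if T' = ∅ then (1:ℝ) else 0) = 1 := by
      rw [Finset.sum_ite_eq' T.powerset (∅ : Finset V) (fun _ => (1:ℝ)),
        if_pos (mem_powerset.mpr (empty_subset T))]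
    have e2 : ∑ T' ∈ T.powerset, (if T'.card = 1 then -c else 0) = -(T.card * c) := by
      rw [← Finset.sum_filter]
      rw [← Finset.powersetCard_eq_filter, Finset.sum_const, Finset.card_powersetCard,
        Nat.choose_one_right, nsmul_eq_mul]
      ring
    rw [e1, e2]; ring
  · rw [if_neg hS]
    have hstep : ∀ T' ∈ T.powerset,
        (-1:ℝ) ^ T'.card *
          (if (S ∪ T' : Finset V) = ∅ then (1:ℝ) else if (S ∪ T').card = 1 then c else 0)
          = (if S.card = 1 then (if T' = ∅ then c else 0) else 0) := by
      intro T' hT'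
      have hd : Disjoint S T' := h.mono_right (mem_powerset.mp hT')
      have hne : S ∪ T' ≠ ∅ := fun hc => hS (Finset.union_eq_empty.mp hc).1
      have hcard : (S ∪ T').card = S.card + T'.card := card_union_of_disjoint hd
      rw [if_neg hne, hcard]
      have hS1 : 1 ≤ S.card := Finset.card_pos.mpr (Finset.nonempty_iff_ne_empty.mpr hS)
      by_cases h1 : S.card = 1
      · rw [if_pos h1]
        rcases eq_or_ne T' ∅ with rfl | hne'
        · simp [h1]
        · have : T'.card ≠ 0 := by simpa [Finset.card_eq_zero] using hne'
          have : S.card + T'.card ≠ 1 := by omega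
          simp [this, hne']
      · rw [if_neg h1]
        have : S.card + T'.card ≠ 1 := by omega
        simp [this]
    rw [juntaSum, Finset.sum_congr rfl hstep]
    by_cases h1 : S.card = 1
    · rw [if_pos h1]
      simp only [if_pos h1]
      rw [Finset.sum_ite_eq' T.powerset (∅ : Finset V) (fun _ => c),
        if_pos (mem_powerset.mpr (empty_subset T))]
    · rw [if_neg h1]
      simp [h1]

/-- The assignment `y_∅ = 1`, `y_A = 1/(ω(G)+ℓ)` for singletons, and `y_A = 0`
for `|A| ≥ 2` is feasible for the level-`ℓ` Sherali–Adams lift of `QSTAB(G)`. -/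
theorem sa_feasible_uniform [Fintype V] [DecidableEq V] (G : SimpleGraph V)
    (ℓ : ℕ) (hℓ : 1 ≤ ℓ) :
    SAFeasible G ℓ (fun A =>
      if A = ∅ then 1
      else if A.card = 1 then 1 / ((cliqueNum G : ℝ) + (ℓ : ℝ))
      else 0) := by
  set c : ℝ := 1 / ((cliqueNum G : ℝ) + (ℓ : ℝ)) with hc_def
  have hω0 : (0:ℝ) ≤ (cliqueNum G : ℝ) := Nat.cast_nonneg _
  have hℓ1 : (1:ℝ) ≤ (ℓ : ℝ) := by exact_mod_cast hℓ
  have hpos : (0:ℝ) < (cliqueNum G : ℝ) + (ℓ : ℝ) := by linarith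
  have hc : 0 ≤ c := by rw [hc_def]; positivity
  have hkey : ∀ a : ℝ, a ≤ (cliqueNum G : ℝ) + (ℓ : ℝ) → a * c ≤ 1 := by
    intro a ha
    rw [hc_def, mul_one_div]
    exact (div_le_one hpos).mpr ha
  constructor
  · simp
  intro S T hdis hST
  have hTcard : (T.card : ℝ) ≤ (ℓ : ℝ) := by
    exact_mod_cast le_trans (card_le_card subset_union_right) hST
  refine ⟨?_, ?_, ?_⟩
  · -- clique constraints
    intro Q hQ
    by_cases hS : S = ∅
    · subst hS
      rw [juntaSum_val c hdis, if_pos rfl]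
      have hterm : ∀ i ∈ Q, juntaSum (fun A => if A = ∅ then (1:ℝ)
          else if A.card = 1 then c else 0) (insert i ∅) T ≤ c := by
        intro i _
        by_cases hiT : i ∈ T
        · rw [juntaSum_insert_mem _ hiT]; exact hc
        · have hdis' : Disjoint (insert i (∅ : Finset V)) T :=
            Finset.disjoint_insert_left.mpr ⟨hiT, disjoint_empty_left T⟩
          rw [juntaSum_val c hdis', if_neg (insert_ne_empty i ∅)]
          simp
      have hsum : ∑ i ∈ Q, juntaSum (fun A => if A = ∅ then (1:ℝ)
          else if A.card = 1 then c else 0) (insert i ∅) T ≤ Q.card * c := by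
        calc _ ≤ ∑ _i ∈ Q, c := Finset.sum_le_sum hterm
        _ = Q.card * c := by rw [Finset.sum_const, nsmul_eq_mul]
      have hQω : (Q.card : ℝ) ≤ (cliqueNum G : ℝ) := by
        exact_mod_cast card_le_cliqueNum G hQ
      have h1 : ((T.card : ℝ) + Q.card) * c ≤ 1 := hkey _ (by linarith)
      have hexp : ((T.card : ℝ) + Q.card) * c = T.card * c + Q.card * c := by ring
      linarith
    · rw [juntaSum_val c hdis, if_neg hS]
      have hv : 0 ≤ (if S.card = 1 then c else 0) := by split_ifs <;> simp [hc]
      have hterm : ∀ i ∈ Q, juntaSum (fun A => if A = ∅ then (1:ℝ)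
          else if A.card = 1 then c else 0) (insert i S) T ≤
          (if i ∈ S then (if S.card = 1 then c else 0) else 0) := by
        intro i _
        by_cases hiT : i ∈ T
        · rw [juntaSum_insert_mem _ hiT]
          split_ifs <;> simp [hc]
        · have hdis' : Disjoint (insert i S) T :=
            Finset.disjoint_insert_left.mpr ⟨hiT, hdis⟩
          rw [juntaSum_val c hdis', if_neg (insert_ne_empty i S)]
          by_cases hiS : i ∈ S
          · rw [Finset.insert_eq_self.mpr hiS, if_pos hiS]
          · have hS1 : 1 ≤ S.card := Finset.card_pos.mpr (Finset.nonempty_iff_ne_empty.mpr hS)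
            have hic : (insert i S).card = S.card + 1 := card_insert_of_notMem hiS
            have hne1 : (insert i S).card ≠ 1 := by omega
            rw [if_neg hne1, if_neg hiS]
      have hsum : ∑ i ∈ Q, juntaSum (fun A => if A = ∅ then (1:ℝ)
          else if A.card = 1 then c else 0) (insert i S) T ≤
          ((Q ∩ S).card : ℝ) * (if S.card = 1 then c else 0) := by
        calc _ ≤ ∑ i ∈ Q, (if i ∈ S then (if S.card = 1 then c else 0) else 0) :=
              Finset.sum_le_sum hterm
        _ = ∑ _i ∈ Q ∩ S, (if S.card = 1 then c else 0) := by
              rw [Finset.sum_ite_mem]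
        _ = ((Q ∩ S).card : ℝ) * (if S.card = 1 then c else 0) := by
              rw [Finset.sum_const, nsmul_eq_mul]
      by_cases h1 : S.card = 1
      · rw [if_pos h1] at hsum ⊢
        have hQS : (Q ∩ S).card ≤ 1 := le_trans (card_le_card inter_subset_right) (le_of_eq h1)
        have : ((Q ∩ S).card : ℝ) * c ≤ 1 * c := by
          apply mul_le_mul_of_nonneg_right _ hc
          exact_mod_cast hQS
        linarith
      · rw [if_neg h1] at hsum ⊢
        rw [mul_zero] at hsum
        linarith
  · -- nonnegativity
    rw [juntaSum_val c hdis]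
    split_ifs with h1 h2
    · have := hkey (T.card : ℝ) (by linarith)
      linarith
    · exact hc
    · exact le_refl 0
  · intro i
    by_cases hiT : i ∈ T
    · rw [juntaSum_insert_mem _ hiT]
    · have hdis' : Disjoint (insert i S) T :=
        Finset.disjoint_insert_left.mpr ⟨hiT, hdis⟩
      rw [juntaSum_val c hdis', if_neg (insert_ne_empty i S)]
      split_ifs
      · exact hc
      · exact le_refl 0
end

section
/- For any graph G on n vertices and ℓ ≥ 1, the integrality gap of the level-ℓ Sherali–Adams lift of QSTAB(G) for maximum independent set is at least n / (α(G)·(ω(G)+ℓ)); that is, the SA^+_ℓ LP has objective value at least n/(ω(G)+ℓ) while the true maximum independent set has size α(G). -/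
open Finset

variable {V : Type*}

/-- The independence number `α(G)`. -/
noncomputable def indepNum [Fintype V] (G : SimpleGraph V) : ℕ :=
  sSup {n | ∃ s : Finset V, s.card = n ∧ IsIndep G s}

/-- The witness solution: `1` on `∅`, `1/(ω(G)+ℓ)` on singletons, `0` elsewhere. -/
noncomputable def yWit [Fintype V] [DecidableEq V] (G : SimpleGraph V) (ℓ : ℕ) :
    Finset V → ℝ :=
  fun S => if S = ∅ then 1 else if S.card = 1 then 1 / ((cliqueNum G : ℝ) + (ℓ : ℝ)) else 0

lemma juntaSum_insert [DecidableEq V] (y : Finset V → ℝ) (S T : Finset V) {a : V}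
    (ha : a ∉ T) :
    juntaSum y S (insert a T) = juntaSum y S T - juntaSum y (insert a S) T := by
  unfold juntaSum
  rw [Finset.sum_powerset_insert ha]
  have h : ∀ T' ∈ T.powerset, (-1 : ℝ) ^ (insert a T').card * y (S ∪ insert a T')
      = -((-1 : ℝ) ^ T'.card * y (insert a S ∪ T')) := by
    intro T' hT'
    have haT' : a ∉ T' := fun h => ha (Finset.mem_powerset.mp hT' h)
    rw [Finset.card_insert_of_notMem haT', pow_succ,
      show S ∪ insert a T' = insert a S ∪ T' by
        rw [Finset.union_insert, Finset.insert_union]]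
    ring
  rw [Finset.sum_congr rfl h, Finset.sum_neg_distrib]
  ring

lemma juntaSum_big [Fintype V] [DecidableEq V] (G : SimpleGraph V) (ℓ : ℕ)
    (S T : Finset V) (hS : 2 ≤ S.card) : juntaSum (yWit G ℓ) S T = 0 := by
  induction T using Finset.induction_on generalizing S with
  | empty =>
      have h1 : S ≠ ∅ := by intro h; simp [h] at hS
      have h2 : S.card ≠ 1 := by omega
      simp [juntaSum, yWit, h1, h2]
  | @insert a T' haT' ih =>
      rw [juntaSum_insert _ _ _ haT', ih S hS,
        ih (insert a S) (le_trans hS (Finset.card_le_card (Finset.subset_insert a S)))]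
      ring

lemma juntaSum_single [Fintype V] [DecidableEq V] (G : SimpleGraph V) (ℓ : ℕ)
    (i : V) (T : Finset V) :
    juntaSum (yWit G ℓ) {i} T =
      if i ∈ T then 0 else 1 / ((cliqueNum G : ℝ) + (ℓ : ℝ)) := by
  induction T using Finset.induction_on with
  | empty => simp [juntaSum, yWit]
  | @insert a T' haT' ih =>
      rw [juntaSum_insert _ _ _ haT']
      by_cases hai : a = i
      · subst hai
        rw [Finset.insert_eq_self.mpr (Finset.mem_singleton_self a), ih,
          if_pos (Finset.mem_insert_self a T')]
        ring
      · have hcard : 2 ≤ (insert a ({i} : Finset V)).card := by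
          rw [Finset.card_insert_of_notMem (by simp [hai]), Finset.card_singleton]
        rw [juntaSum_big G ℓ _ _ hcard, ih, sub_zero]
        have : (i ∈ insert a T') ↔ (i ∈ T') := by
          rw [Finset.mem_insert]
          exact or_iff_right (Ne.symm hai)
        simp [this]

lemma juntaSum_empty [Fintype V] [DecidableEq V] (G : SimpleGraph V) (ℓ : ℕ)
    (T : Finset V) :
    juntaSum (yWit G ℓ) (∅ : Finset V) T =
      1 - (T.card : ℝ) * (1 / ((cliqueNum G : ℝ) + (ℓ : ℝ))) := by
  induction T using Finset.induction_on with
  | empty => simp [juntaSum, yWit]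
  | @insert a T' haT' ih =>
      rw [juntaSum_insert _ _ _ haT', ih, Finset.insert_empty,
        juntaSum_single G ℓ a T', if_neg haT',
        Finset.card_insert_of_notMem haT']
      push_cast
      ring

lemma juntaSum_nonneg_of_nonempty [Fintype V] [DecidableEq V] (G : SimpleGraph V)
    (ℓ : ℕ) (S T : Finset V) (hS : S.Nonempty) : 0 ≤ juntaSum (yWit G ℓ) S T := by
  have hc : (0 : ℝ) ≤ 1 / ((cliqueNum G : ℝ) + (ℓ : ℝ)) := by positivity
  by_cases h1 : S.card = 1
  · obtain ⟨s, rfl⟩ := Finset.card_eq_one.mp h1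
    rw [juntaSum_single]
    split
    · exact le_rfl
    · exact hc
  · have h2 : 2 ≤ S.card := by
      have := Finset.card_pos.mpr hS; omega
    rw [juntaSum_big G ℓ S T h2]

lemma clique_card_le [Fintype V] (G : SimpleGraph V) (Q : Finset V)
    (hQ : G.IsClique ↑Q) : Q.card ≤ cliqueNum G :=
  le_csSup ⟨Fintype.card V, by rintro n ⟨s, rfl, -⟩; exact s.card_le_univ⟩ ⟨Q, rfl, hQ⟩

lemma yWit_feasible [Fintype V] [DecidableEq V] (G : SimpleGraph V)
    (ℓ : ℕ) (hℓ : 1 ≤ ℓ) :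
    (SAFeasible G ℓ (yWit G ℓ)) := by
  set c : ℝ := 1 / ((cliqueNum G : ℝ) + (ℓ : ℝ)) with hcdef
  have hpos : (0 : ℝ) < (cliqueNum G : ℝ) + (ℓ : ℝ) := by
    have : (1 : ℝ) ≤ (ℓ : ℝ) := by exact_mod_cast hℓ
    positivity
  have hc : (0 : ℝ) ≤ c := by positivity
  have hone : ((cliqueNum G : ℝ) + (ℓ : ℝ)) * c = 1 := by
    rw [hcdef, mul_one_div, div_self (ne_of_gt hpos)]
  constructor
  · simp [yWit]
  intro S T hdisj hcard
  refine ⟨?_, ?_, ?_⟩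
  · -- clique constraints
    intro Q hQ
    by_cases hS0 : S = ∅
    · subst hS0
      rw [juntaSum_empty]
      have hT : (T.card : ℝ) ≤ (ℓ : ℝ) := by
        have : T.card ≤ ℓ := by simpa using hcard
        exact_mod_cast this
      have hQc : (Q.card : ℝ) ≤ (cliqueNum G : ℝ) := by
        exact_mod_cast clique_card_le G Q hQ
      have hsum : ∑ i ∈ Q, juntaSum (yWit G ℓ) (insert i (∅ : Finset V)) T ≤ Q.card * c := by
        have : ∀ i ∈ Q, juntaSum (yWit G ℓ) (insert i (∅ : Finset V)) T ≤ c := by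
          intro i _
          rw [Finset.insert_empty, juntaSum_single, ← hcdef]
          split
    
          · exact hc
          · exact le_rfl
        calc ∑ i ∈ Q, juntaSum (yWit G ℓ) (insert i (∅ : Finset V)) T
            ≤ ∑ _i ∈ Q, c := Finset.sum_le_sum this
          _ = Q.card * c := by rw [Finset.sum_const, nsmul_eq_mul]
      have h1 : (Q.card : ℝ) * c ≤ (cliqueNum G : ℝ) * c := by
        exact mul_le_mul_of_nonneg_right hQc hc
      have h2 : (T.card : ℝ) * c ≤ (ℓ : ℝ) * c := by
        exact mul_le_mul_of_nonneg_right hT hc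
      nlinarith [hsum, h1, h2, hone]
    · by_cases h1 : S.card = 1
      · obtain ⟨s, rfl⟩ := Finset.card_eq_one.mp h1
        have hsT : s ∉ T := Finset.disjoint_left.mp hdisj (Finset.mem_singleton_self s)
        rw [juntaSum_single, if_neg hsT, ← hcdef]
        have hterm : ∀ i ∈ Q, juntaSum (yWit G ℓ) (insert i {s}) T
            = if i = s then c else 0 := by
          intro i _
          by_cases his : i = s
          · subst his
            rw [Finset.insert_eq_self.mpr (Finset.mem_singleton_self i),
              juntaSum_single, if_neg hsT, if_pos rfl]
          · rw [if_neg his, juntaSum_big G ℓ _ _ (by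
              rw [Finset.card_insert_of_notMem (by simp [his]), Finset.card_singleton])]
        rw [Finset.sum_congr rfl hterm, Finset.sum_ite_eq' Q s (fun _ => c)]
        split
        · simp
        · simpa using hc
      · have h2 : 2 ≤ S.card := by
          have : S.Nonempty := Finset.nonempty_iff_ne_empty.mpr hS0
          have := Finset.card_pos.mpr this; omega
        rw [juntaSum_big G ℓ S T h2]
        have : ∀ i ∈ Q, juntaSum (yWit G ℓ) (insert i S) T = 0 := by
          intro i _
          exact juntaSum_big G ℓ _ _ (le_trans h2 (Finset.card_le_card (Finset.subset_insert i S)))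
        rw [Finset.sum_congr rfl this, Finset.sum_const, smul_zero]
        simp
  · -- nonnegativity
    by_cases hS0 : S = ∅
    · subst hS0
      rw [juntaSum_empty]
      have hT : (T.card : ℝ) ≤ (ℓ : ℝ) := by
        have : T.card ≤ ℓ := by simpa using hcard
        exact_mod_cast this
      have h2 : (T.card : ℝ) * c ≤ (ℓ : ℝ) * c := mul_le_mul_of_nonneg_right hT hc
      have hω : (0 : ℝ) ≤ (cliqueNum G : ℝ) := Nat.cast_nonneg _
      nlinarith [hone, hc]
    · exact juntaSum_nonneg_of_nonempty G ℓ S T (Finset.nonempty_iff_ne_empty.mpr hS0)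
  · intro i
    exact juntaSum_nonneg_of_nonempty G ℓ _ T (Finset.insert_nonempty i S)

/-- Integrality gap of the level-`ℓ` Sherali–Adams lift of `QSTAB(G)`: there is a
feasible solution of objective value `n/(ω(G)+ℓ)`, while every independent set has
size at most `α(G)`; hence the gap is at least `n/(α(G)·(ω(G)+ℓ))`. -/
theorem sa_integrality_gap [Fintype V] [DecidableEq V] (G : SimpleGraph V)
    (ℓ : ℕ) (hℓ : 1 ≤ ℓ) :
    ∃ y : Finset V → ℝ, SAFeasible G ℓ y ∧
      (∑ i : V, y {i}) = (Fintype.card V : ℝ) / ((cliqueNum G : ℝ) + (ℓ : ℝ)) ∧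
      (∀ s : Finset V, IsIndep G s → s.card ≤ indepNum G) ∧
      (Fintype.card V : ℝ) / ((indepNum G : ℝ) * ((cliqueNum G : ℝ) + (ℓ : ℝ))) ≤
        (∑ i : V, y {i}) / (indepNum G : ℝ) := by
  have hobj : (∑ i : V, yWit G ℓ {i})
      = (Fintype.card V : ℝ) / ((cliqueNum G : ℝ) + (ℓ : ℝ)) := by
    have h : ∀ i : V, yWit G ℓ {i} = 1 / ((cliqueNum G : ℝ) + (ℓ : ℝ)) := by
      intro i; simp [yWit]
    rw [Finset.sum_congr rfl (fun i _ => h i), Finset.sum_const, Finset.card_univ,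
      nsmul_eq_mul, mul_one_div]
  refine ⟨yWit G ℓ, yWit_feasible G ℓ hℓ, hobj, ?_, ?_⟩
  · intro s hs
    exact le_csSup ⟨Fintype.card V, by rintro n ⟨t, rfl, -⟩; exact t.card_le_univ⟩
      ⟨s, rfl, hs⟩
  · rw [hobj, div_div, mul_comm]
end

section
/- Suppose a graph class closed under clique replacement is (t,γ)-conditionally χ-bounded, i.e., every G in the class with α(G) ≥ t satisfies χ(G) ≤ γ·ω(G). Then for every G in the class: either α(G) ≤ t−1 (so the t-level SoS relaxation of the independent set polytope is exact), or every point of QSTAB(G) has objective value at most γ times the maximum weight independent set; consequently t rounds of SoS give a γ-estimation for maximum weight independent set on this class. -/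
open Finset

variable {V : Type*}

/-- The chromatic number `χ(G)`, as a natural number. -/
noncomputable def chromNum [Fintype V] (G : SimpleGraph V) : ℕ :=
  sInf {m | G.Colorable m}

/-- Membership in the clique-constrained stable set polytope `QSTAB(G)`. -/
def InQSTAB (G : SimpleGraph V) (x : V → ℝ) : Prop :=
  (∀ i, 0 ≤ x i ∧ x i ≤ 1) ∧
  ∀ Q : Finset V, G.IsClique ↑Q → ∑ i ∈ Q, x i ≤ 1

/-- Clique replacement at vertex `v`: replace `v` by a clique on `m` vertices,
each joined to every neighbor of `v`. -/
def cliqueReplace (G : SimpleGraph V) (v : V) (m : ℕ) :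
    SimpleGraph ({u : V // u ≠ v} ⊕ Fin m) where
  Adj x y :=
    match x, y with
    | Sum.inl u, Sum.inl w => G.Adj u.1 w.1
    | Sum.inl u, Sum.inr _ => G.Adj u.1 v
    | Sum.inr _, Sum.inl w => G.Adj v w.1
    | Sum.inr a, Sum.inr b => a ≠ b
  symm := by
    constructor
    rintro (u | a) (w | b) h
    · exact h.symm
    · exact h.symm
    · exact h.symm
    · exact h.symm
  loopless := by
    constructor
    rintro (u | a) h
    · exact G.irrefl h
    · exact h rfl

/-!
Fix `x ∈ QSTAB(G)` and `n ≥ 1`, and blow each vertex `i` up into a clique of `⌊n xᵢ⌋ + 1`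
vertices. The blowup `H` stays in the class and `α(H) ≥ α(G) ≥ t`. A clique of `H` projects onto a
clique `Q` of `G`, so `ω(H) ≤ ∑_{i ∈ Q} (n xᵢ + 1) ≤ n + |V(G)|`; a colour class of `H` projects
injectively onto an independent set of `G`, so `n ∑ wᵢ xᵢ ≤ ∑ (⌊n xᵢ⌋ + 1) wᵢ ≤ χ(H) α_w(G)`, where
`α_w` is the maximum weight of an independent set. Hence `n ∑ wᵢ xᵢ ≤ γ (n + |V(G)|) α_w(G)` for
every `n`, and letting `n → ∞` gives `∑ wᵢ xᵢ ≤ γ α_w(G)`.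
-/

lemma isIndep_empty (G : SimpleGraph V) : IsIndep G ∅ := by simp [IsIndep]

section Invariants

variable [Fintype V] (G : SimpleGraph V)

lemma bddAbove_card_setOf (p : Finset V → Prop) :
    BddAbove {n | ∃ s : Finset V, #s = n ∧ p s} :=
  ⟨Fintype.card V, fun _ ⟨s, hs, _⟩ => hs ▸ card_le_univ s⟩

variable {G}

lemma card_le_indepNum {s : Finset V} (hs : IsIndep G s) : #s ≤ indepNum G :=
  le_csSup (bddAbove_card_setOf _) ⟨s, rfl, hs⟩

variable (G)

lemma exists_isIndep_card_eq_indepNum : ∃ s : Finset V, IsIndep G s ∧ #s = indepNum G := by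
  obtain ⟨s, hs, hind⟩ := Nat.sSup_mem (s := {n | ∃ s : Finset V, #s = n ∧ IsIndep G s})
    ⟨0, ∅, card_empty, isIndep_empty G⟩ (bddAbove_card_setOf _)
  exact ⟨s, hind, hs⟩

lemma exists_isClique_card_eq_cliqueNum :
    ∃ s : Finset V, G.IsClique ↑s ∧ #s = cliqueNum G := by
  obtain ⟨s, hs, hcl⟩ := Nat.sSup_mem (s := {n | ∃ s : Finset V, #s = n ∧ G.IsClique ↑s})
    ⟨0, ∅, card_empty, by simp⟩ (bddAbove_card_setOf _)
  exact ⟨s, hcl, hs⟩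

lemma colorable_chromNum : G.Colorable (chromNum G) :=
  Nat.sInf_mem (s := {m | G.Colorable m}) ⟨_, G.colorable_of_fintype⟩

lemma chromNum_pos [Nonempty V] : 0 < chromNum G := by
  obtain ⟨C⟩ := colorable_chromNum G
  exact Fin.pos (C (Classical.arbitrary V))

lemma nonempty_of_indepNum_pos (h : 0 < indepNum G) : Nonempty V := by
  obtain ⟨s, -, hs⟩ := exists_isIndep_card_eq_indepNum G
  obtain ⟨v, -⟩ := card_pos.mp (hs ▸ h)
  exact ⟨v⟩

lemma exists_isIndep_forall_sum_le (w : V → ℝ) :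
    ∃ s : Finset V, IsIndep G s ∧ ∀ s', IsIndep G s' → ∑ i ∈ s', w i ≤ ∑ i ∈ s, w i := by
  classical
  obtain ⟨s, hs, hmax⟩ := exists_max_image {s : Finset V | IsIndep G s} (fun s => ∑ i ∈ s, w i)
    ⟨∅, by simpa using isIndep_empty G⟩
  exact ⟨s, (mem_filter.mp hs).2, fun s' hs' => hmax s' (by simpa using hs')⟩

lemma isIndep_colorClass {α : Type*} [DecidableEq α] (C : G.Coloring α) (c : α) :
    IsIndep G {v | C v = c} := by
  intro u hu v hv _ hadj
  exact C.valid hadj ((mem_filter.mp hu).2.trans (mem_filter.mp hv).2.symm)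

lemma sum_le_chromNum_mul {f : V → ℝ} {M : ℝ} (hf : ∀ s, IsIndep G s → ∑ v ∈ s, f v ≤ M) :
    ∑ v, f v ≤ chromNum G * M := by
  obtain ⟨C⟩ := colorable_chromNum G
  calc ∑ v, f v = ∑ c, ∑ v with C v = c, f v := (sum_fiberwise _ C f).symm
    _ ≤ ∑ _c : Fin (chromNum G), M := sum_le_sum fun c _ => hf _ (isIndep_colorClass G C c)
    _ = chromNum G * M := by simp

end Invariants

lemma le_of_forall_nat_mul_le_mul_add {a b C : ℝ} (h : ∀ n : ℕ, 0 < n → n * a ≤ n * b + C) :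
    a ≤ b := by
  by_contra! hba
  obtain ⟨n, hn⟩ := exists_nat_gt (C / (a - b))
  have := h (n + 1) n.succ_pos
  rw [div_lt_iff₀ (sub_pos.mpr hba)] at hn
  push_cast at this
  nlinarith

/-- `H` arises from `G` by replacing each vertex `i` with a clique of `m i` vertices, the fibre of
`π` over `i`. -/
structure IsCliqueBlowup {W W' : Type*} [Fintype W'] [DecidableEq W] (H : SimpleGraph W')
    (G : SimpleGraph W) (m : W → ℕ) (π : W' → W) : Prop where
  adj_iff : ∀ a b, H.Adj a b ↔ G.Adj (π a) (π b) ∨ (π a = π b ∧ a ≠ b)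
  card_fiber : ∀ i, #{a | π a = i} = m i

namespace IsCliqueBlowup

variable {W W' W'' : Type*} [Fintype W'] [DecidableEq W] {G : SimpleGraph W}
  {H : SimpleGraph W'} {m : W → ℕ} {π : W' → W}

lemma refl [Fintype W] (G : SimpleGraph W) : IsCliqueBlowup G G (fun _ => 1) id where
  adj_iff a b := by simp +contextual
  card_fiber i := by simp [filter_eq']

lemma trans [Fintype W''] [DecidableEq W'] {K : SimpleGraph W''} {m' : W' → ℕ} {π' : W'' → W'}
    (hK : IsCliqueBlowup K H m' π') (hH : IsCliqueBlowup H G m π) :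
    IsCliqueBlowup K G (fun i => ∑ j with π j = i, m' j) (π ∘ π') where
  adj_iff a b := by
    rw [hK.adj_iff, hH.adj_iff]
    by_cases hab : π' a = π' b
    · simp [hab]
    · have hne : a ≠ b := fun h => hab (congrArg π' h)
      simp [hab, hne]
  card_fiber i := by
    rw [card_eq_sum_card_fiberwise (f := π') (t := {j | π j = i}) (by intro a; simp)]
    refine sum_congr rfl fun j hj => ?_
    rw [← hK.card_fiber j, filter_filter]
    congr 1
    ext a
    simp only [mem_filter, mem_univ, true_and] at hj ⊢
    constructor
    · exact fun h => h.2
    · exact fun h => ⟨by simp [h, hj], h⟩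

lemma exists_isClique_cliqueNum_le (hH : IsCliqueBlowup H G m π) :
    ∃ Q : Finset W, G.IsClique ↑Q ∧ cliqueNum H ≤ ∑ i ∈ Q, m i := by
  obtain ⟨K, hK, hcard⟩ := exists_isClique_card_eq_cliqueNum H
  refine ⟨K.image π, ?_, ?_⟩
  · simp only [coe_image]
    rintro _ ⟨a, ha, rfl⟩ _ ⟨b, hb, rfl⟩ hne
    have hab : a ≠ b := fun h => hne (h ▸ rfl)
    exact ((hH.adj_iff a b).mp (hK ha hb hab)).resolve_right fun h => hne h.1
  · rw [← hcard, card_eq_sum_card_image π K]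
    refine sum_le_sum fun i _ => ?_
    rw [← hH.card_fiber i]
    exact card_le_card (filter_subset_filter _ (subset_univ K))

lemma sum_le_of_isIndep (hH : IsCliqueBlowup H G m π) {w : W → ℝ} {M : ℝ}
    (hM : ∀ s, IsIndep G s → ∑ i ∈ s, w i ≤ M) {A : Finset W'} (hA : IsIndep H A) :
    ∑ a ∈ A, w (π a) ≤ M := by
  have hinj : Set.InjOn π A := fun a ha b hb hab => by
    by_contra hne
    exact hA a ha b hb hne ((hH.adj_iff a b).mpr (Or.inr ⟨hab, hne⟩))
  have hind : IsIndep G (A.image π) := by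
    simp only [IsIndep, mem_image]
    rintro _ ⟨a, ha, rfl⟩ _ ⟨b, hb, rfl⟩ hne hadj
    exact hA a ha b hb (fun h => hne (h ▸ rfl)) ((hH.adj_iff a b).mpr (Or.inl hadj))
  rw [← sum_image hinj]
  exact hM _ hind

variable [Fintype W]

lemma sum_comp (hH : IsCliqueBlowup H G m π) (f : W → ℝ) : ∑ a, f (π a) = ∑ i, m i * f i := by
  rw [← sum_fiberwise' univ π f]
  simp [hH.card_fiber]

lemma indepNum_le (hH : IsCliqueBlowup H G m π) (hm : ∀ i, 0 < m i) :
    indepNum G ≤ indepNum H := by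
  classical
  have hfiber : ∀ i, ∃ a, π a = i := fun i => by
    obtain ⟨a, ha⟩ := card_pos.mp ((hH.card_fiber i).symm ▸ hm i)
    exact ⟨a, (mem_filter.mp ha).2⟩
  choose σ hσ using hfiber
  obtain ⟨s, hs, hcard⟩ := exists_isIndep_card_eq_indepNum G
  have hσinj : Function.Injective σ := Function.LeftInverse.injective hσ
  have hind : IsIndep H (s.image σ) := by
    simp only [IsIndep, mem_image]
    rintro _ ⟨i, hi, rfl⟩ _ ⟨j, hj, rfl⟩ hne hadj
    have hij : i ≠ j := fun h => hne (h ▸ rfl)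
    rw [hH.adj_iff, hσ, hσ] at hadj
    exact hadj.elim (hs i hi j hj hij) fun h => hij h.1
  calc indepNum G = #(s.image σ) := by rw [card_image_of_injective s hσinj, hcard]
    _ ≤ indepNum H := card_le_indepNum hind

lemma sum_mul_le_chromNum_mul (hH : IsCliqueBlowup H G m π) {w : W → ℝ} {M : ℝ}
    (hM : ∀ s, IsIndep G s → ∑ i ∈ s, w i ≤ M) :
    ∑ i, m i * w i ≤ chromNum H * M := by
  rw [← hH.sum_comp]
  exact sum_le_chromNum_mul H fun A hA => hH.sum_le_of_isIndep hM hA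

end IsCliqueBlowup

lemma isCliqueBlowup_cliqueReplace {W : Type*} [Fintype W] [DecidableEq W] (G : SimpleGraph W)
    (v : W) (k : ℕ) :
    IsCliqueBlowup (cliqueReplace G v k) G (Function.update (fun _ => 1) v k)
      (Sum.elim Subtype.val fun _ => v) where
  adj_iff := by
    rintro (u | a) (u' | b)
    · simp [cliqueReplace, Subtype.val_inj]
    · simp [cliqueReplace, u.2]
    · simp [cliqueReplace, Ne.symm u'.2]
    · simp [cliqueReplace]
  card_fiber i := by
    rw [card_filter, Fintype.sum_sum_type]
    by_cases hi : i = v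
    · subst hi
      simp +contextual
    · rw [Fintype.sum_eq_single ⟨i, hi⟩ (by simp +contextual [Subtype.ext_iff])]
      simp [hi, Ne.symm hi]

lemma exists_isCliqueBlowup_of_closed
    {P : ∀ (W : Type) [Fintype W] [DecidableEq W], SimpleGraph W → Prop}
    (hclosed : ∀ (W : Type) [Fintype W] [DecidableEq W] (G : SimpleGraph W)
      (v : W) (m : ℕ), P W G → P _ (cliqueReplace G v m))
    {W : Type} [Fintype W] [DecidableEq W] {G : SimpleGraph W} (hG : P W G) (m : W → ℕ) :
    ∃ (W' : Type) (_ : Fintype W') (_ : DecidableEq W') (H : SimpleGraph W') (π : W' → W),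
      P W' H ∧ IsCliqueBlowup H G m π := by
  -- blow up the vertices of `S` one at a time
  suffices ∀ S : Finset W, ∃ (W' : Type) (_ : Fintype W') (_ : DecidableEq W')
      (H : SimpleGraph W') (π : W' → W),
      P W' H ∧ IsCliqueBlowup H G (fun i => if i ∈ S then m i else 1) π by
    simpa using this univ
  intro S
  induction S using Finset.induction_on with
  | empty => exact ⟨W, _, _, G, id, hG, by simpa using IsCliqueBlowup.refl G⟩
  | insert v S hv ih =>
    obtain ⟨W', _, _, H, π, hH, hHG⟩ := ih
    obtain ⟨u, hu⟩ := card_eq_one.mp ((hHG.card_fiber v).trans (if_neg hv))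
    have hπu : π u = v := by simpa using hu.symm.subset (mem_singleton_self u)
    have hm : (fun i => ∑ j with π j = i, Function.update (fun _ => 1) u (m v) j) =
        fun i => if i ∈ insert v S then m i else 1 := by
      funext i
      by_cases hi : i = v
      · subst hi
        simp [hu]
      · have hne : ∀ j ∈ ({j | π j = i} : Finset W'), j ≠ u := by
          rintro j hj rfl
          exact hi ((mem_filter.mp hj).2.symm.trans hπu)
        rw [sum_congr rfl fun j hj => Function.update_of_ne (hne j hj) _ _, sum_const,
          smul_eq_mul, mul_one, hHG.card_fiber i]
        simp [hi]
    exact ⟨_, inferInstance, inferInstance, _, _, hclosed W' H u (m v) hH,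
      hm ▸ (isCliqueBlowup_cliqueReplace H u (m v)).trans hHG⟩

lemma sum_floor_add_one_le {W : Type*} {Q : Finset W} {x : W → ℝ} (hx : ∀ i, 0 ≤ x i)
    (hQ : ∑ i ∈ Q, x i ≤ 1) {N : ℝ} (hN : 0 ≤ N) :
    ∑ i ∈ Q, ((⌊N * x i⌋₊ + 1 : ℕ) : ℝ) ≤ N + #Q := by
  calc ∑ i ∈ Q, ((⌊N * x i⌋₊ + 1 : ℕ) : ℝ) ≤ ∑ i ∈ Q, (N * x i + 1) := by
        gcongr with i
        push_cast
        gcongr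
        exact Nat.floor_le (mul_nonneg hN (hx i))
    _ = N * ∑ i ∈ Q, x i + #Q := by simp [sum_add_distrib, mul_sum]
    _ ≤ N + #Q := by nlinarith

lemma IsCliqueBlowup.nat_mul_sum_mul_le {W W' : Type*} [Fintype W] [Fintype W'] [DecidableEq W]
    {G : SimpleGraph W} {H : SimpleGraph W'} {π : W' → W} {n : ℕ} {x w : W → ℝ} {γ M : ℝ}
    (hH : IsCliqueBlowup H G (fun i => ⌊n * x i⌋₊ + 1) π) (hx : InQSTAB G x)
    (hw : ∀ i, 0 ≤ w i) (hγ : 0 ≤ γ) (hM : ∀ s, IsIndep G s → ∑ i ∈ s, w i ≤ M)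
    (hχH : (chromNum H : ℝ) ≤ γ * cliqueNum H) :
    n * ∑ i, w i * x i ≤ n * (γ * M) + γ * Fintype.card W * M := by
  have hM₀ : 0 ≤ M := by simpa using hM ∅ (isIndep_empty G)
  obtain ⟨Q, hQ, hωQ⟩ := hH.exists_isClique_cliqueNum_le
  have hωH : (cliqueNum H : ℝ) ≤ n + Fintype.card W := calc
    (cliqueNum H : ℝ) ≤ ∑ i ∈ Q, ((⌊n * x i⌋₊ + 1 : ℕ) : ℝ) := by exact_mod_cast hωQ
    _ ≤ n + #Q := sum_floor_add_one_le (fun i => (hx.1 i).1) (hx.2 Q hQ) n.cast_nonneg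
    _ ≤ n + Fintype.card W := by gcongr; exact_mod_cast card_le_univ Q
  calc n * ∑ i, w i * x i = ∑ i, n * x i * w i := by
        rw [mul_sum]; exact sum_congr rfl fun i _ => by ring
    _ ≤ ∑ i, ((⌊n * x i⌋₊ + 1 : ℕ) : ℝ) * w i := by
        refine sum_le_sum fun i _ => mul_le_mul_of_nonneg_right ?_ (hw i)
        push_cast
        exact (Nat.lt_floor_add_one _).le
    _ ≤ chromNum H * M := hH.sum_mul_le_chromNum_mul hM
    _ ≤ γ * (n + Fintype.card W) * M := by gcongr; exact hχH.trans (by gcongr)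
    _ = n * (γ * M) + γ * Fintype.card W * M := by ring

theorem conditional_chi_bounded_estimation_general
    (t : ℕ) (γ : ℝ)
    (P : ∀ (W : Type) [Fintype W] [DecidableEq W], SimpleGraph W → Prop)
    (hclosed : ∀ (W : Type) [Fintype W] [DecidableEq W] (G : SimpleGraph W)
      (v : W) (m : ℕ), P W G → P _ (cliqueReplace G v m))
    (hχ : ∀ (W : Type) [Fintype W] [DecidableEq W] (G : SimpleGraph W),
      P W G → t ≤ indepNum G → (chromNum G : ℝ) ≤ γ * (cliqueNum G : ℝ)) :
    ∀ (W : Type) [Fintype W] [DecidableEq W] (G : SimpleGraph W) (w : W → ℝ),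
      (∀ i, 0 ≤ w i) → P W G →
      indepNum G ≤ t - 1 ∨
      ∀ x : W → ℝ, InQSTAB G x →
        ∃ s : Finset W, IsIndep G s ∧ ∑ i, w i * x i ≤ γ * ∑ i ∈ s, w i := by
  intro W _ _ G w hw hG
  refine or_iff_not_imp_left.mpr fun hα x hx => ?_
  have htα : t ≤ indepNum G := by omega
  have : Nonempty W := nonempty_of_indepNum_pos G (by omega)
  have hγ : 0 ≤ γ := by
    have hχpos : (0 : ℝ) < chromNum G := by exact_mod_cast chromNum_pos G
    exact (pos_of_mul_pos_left (hχpos.trans_le (hχ W G hG htα)) (Nat.cast_nonneg _)).le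
  obtain ⟨s, hs, hmax⟩ := exists_isIndep_forall_sum_le G w
  refine ⟨s, hs, le_of_forall_nat_mul_le_mul_add
    (C := γ * Fintype.card W * ∑ i ∈ s, w i) fun n _ => ?_⟩
  obtain ⟨W', _, _, H, π, hH, hHG⟩ :=
    exists_isCliqueBlowup_of_closed hclosed hG fun i => ⌊n * x i⌋₊ + 1
  have hαH : t ≤ indepNum H := htα.trans (hHG.indepNum_le fun _ => Nat.succ_pos _)
  exact hHG.nat_mul_sum_mul_le hx hw hγ hmax (hχ W' H hH hαH)

/-- Conditional χ-boundedness implies that convex relaxations estimate MWIS: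
if a graph class `P` is closed under clique replacement and is `(t,γ)`-conditionally
χ-bounded (`χ(G) ≤ γ·ω(G)` whenever `α(G) ≥ t`), then for every weighted graph `G`
in the class, either `α(G) ≤ t − 1` (where the level-`t` SoS relaxation is exact),
or every point of `QSTAB(G)` has objective value at most `γ` times the maximum
weight of an independent set; hence `t` rounds of SoS give a `γ`-estimation. -/
theorem conditional_chi_bounded_estimation
    (t : ℕ) (γ : ℝ) (ht : 1 ≤ t)
    (P : ∀ (W : Type) [Fintype W] [DecidableEq W], SimpleGraph W → Prop)
    (hclosed : ∀ (W : Type) [Fintype W] [DecidableEq W] (G : SimpleGraph W)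
      (v : W) (m : ℕ), P W G → P _ (cliqueReplace G v m))
    (hχ : ∀ (W : Type) [Fintype W] [DecidableEq W] (G : SimpleGraph W),
      P W G → t ≤ indepNum G → (chromNum G : ℝ) ≤ γ * (cliqueNum G : ℝ)) :
    ∀ (W : Type) [Fintype W] [DecidableEq W] (G : SimpleGraph W) (w : W → ℝ),
      (∀ i, 0 ≤ w i) → P W G →
      indepNum G ≤ t - 1 ∨
      ∀ x : W → ℝ, InQSTAB G x →
        ∃ s : Finset W, IsIndep G s ∧ ∑ i, w i * x i ≤ γ * ∑ i ∈ s, w i :=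
  conditional_chi_bounded_estimation_general t γ P hclosed hχ
end
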